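/- In the example, the value function V[v_T] does not depend on T > 0 and the value function V[w_λ] does not depend on λ > 0; hence the limits lim_{T→∞} V[v_T](ω) = V[v_1](ω) and lim_{λ→0⁺} V[w_λ](ω) = V[w_1](ω) exist uniformly in ω ∈ Ω. Nevertheless V[w_1](0,0,0) = 3/4 ≠ 1/2 = V[v_1](0,0,0), so the two uniform limits do not coincide. Thus there exists a set K of feasible processes that is closed with respect to concatenation for which the conclusion of the Uniform Tauberian Theorem fails. -/

import Mathlib

open MeasureTheory Set Filter Topology

noncomputable section

/-- Concatenation `z ⋄_h z'` of two processes at time `h`: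
`(z ⋄_h z')(t) = z(t)` for `t < h` and `(z ⋄_h z')(t) = z'(t - h)` for `t ≥ h`. -/
def concat {Ω : Type*} (z z' : ℝ → Ω) (h : ℝ) : ℝ → Ω :=
  fun t => if t < h then z t else z' (t - h)

/-- The time average `v_T(z) = (1/T) ∫₀^T g(z(t)) dt`. -/
def timeAvg {Ω : Type*} (g : Ω → ℝ) (T : ℝ) (z : ℝ → Ω) : ℝ :=
  (1 / T) * ∫ t in Ioc (0 : ℝ) T, g (z t)

/-- The discounted average `w_λ(z) = λ ∫₀^∞ e^{-λ t} g(z(t)) dt`. -/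
def discAvg {Ω : Type*} (g : Ω → ℝ) (lam : ℝ) (z : ℝ → Ω) : ℝ :=
  lam * ∫ t in Ioi (0 : ℝ), Real.exp (-lam * t) * g (z t)

/-- The value function `V[J](ω) = inf { J(z) : z ∈ K, z(0) = ω }`. -/
def Val {Ω : Type*} (K : Set (ℝ → Ω)) (J : (ℝ → Ω) → ℝ) (ω : Ω) : ℝ :=
  sInf (J '' {z ∈ K | z 0 = ω})

/-- The state space `Ω = ℝ_{≥0} × ℝ_{≥0} × ℝ_{≥0}` of the example,
realized as a subset of `ℝ × ℝ × ℝ`. -/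
def Omega3 : Set (ℝ × ℝ × ℝ) := {p | 0 ≤ p.1 ∧ 0 ≤ p.2.1 ∧ 0 ≤ p.2.2}

/-- The running cost of the example: `g(x,y,r) = 0` if `x ∈ [1,2]` and `r = 0`,
and `g(x,y,r) = 1` otherwise. -/
def gex : ℝ × ℝ × ℝ → ℝ := fun p => if p.1 ∈ Icc (1 : ℝ) 2 ∧ p.2.2 = 0 then 0 else 1

/-- The process `a_ω(t) = (x, y, t + r)` for `ω = (x, y, r)`. -/
def aproc (ω : ℝ × ℝ × ℝ) : ℝ → ℝ × ℝ × ℝ := fun t => (ω.1, ω.2.1, t + ω.2.2)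

/-- The process `b_s(t) = (s t, t, 0)`. -/
def bproc (s : ℝ) : ℝ → ℝ × ℝ × ℝ := fun t => (s * t, t, 0)

/-- The set `K` of feasible processes of the example:
`K = {a_ω : ω ∈ Ω} ∪ {b_s : s ≥ 0} ∪ {b_s ⋄_τ a_{b_s(τ)} : s ≥ 0, τ > 0}`. -/
def Kex : Set (ℝ → ℝ × ℝ × ℝ) :=
  {z | ∃ ω ∈ Omega3, z = aproc ω} ∪ {z | ∃ s : ℝ, 0 ≤ s ∧ z = bproc s} ∪
    {z | ∃ s : ℝ, 0 ≤ s ∧ ∃ τ : ℝ, 0 < τ ∧ z = concat (bproc s) (aproc (bproc s τ)) τ}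

/-!
Every feasible process pays the running cost `1` except on a window `[c, 2c]`: the zero set of
`gex` is reached only along some `b_s`, whose first coordinate `s t` lies in `[1, 2]` exactly for
`t ∈ [1/s, 2/s]`, and an `a`-piece glued on at time `τ` has `r > 0` after `τ`. A window covers at
most half of `[0, T]`, so `v_T ≥ 1/2` with equality for `c = T/2`; its discounted weight is
`u - u²` with `u = e^{-λc}`, at most `1/4`, so `w_λ ≥ 3/4` with equality for `u = 1/2`. Away from
the origin the only feasible process is `a_ω`, of cost `1`. Both value functions are therefore
independent of the parameter, yet they differ at the origin. As `z τ ≠ 0` for `τ > 0`, a process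
glued on at time `τ` must be `a_{z τ}`, which keeps `K` closed under concatenation.
-/

lemma tendstoUniformlyOn_of_eventually_eqOn {ι α β : Type*} [UniformSpace β] {F : ι → α → β}
    {f : α → β} {p : Filter ι} {s : Set α} (h : ∀ᶠ n in p, EqOn (F n) f s) :
    TendstoUniformlyOn F f p s :=
  fun _ hu => h.mono fun _ hn _ hx => hn hx ▸ refl_mem_uniformity hu

lemma val_eq_of_mem_of_forall_le {Ω : Type*} {K : Set (ℝ → Ω)} {J : (ℝ → Ω) → ℝ} {ω : Ω}
    {z : ℝ → Ω} (hz : z ∈ K) (hz0 : z 0 = ω) (hle : ∀ z' ∈ K, z' 0 = ω → J z ≤ J z') :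
    Val K J ω = J z :=
  IsLeast.csInf_eq ⟨⟨z, ⟨hz, hz0⟩, rfl⟩, by
    rintro _ ⟨z', ⟨hz', hz0'⟩, rfl⟩
    exact hle z' hz' hz0'⟩

section Concat

variable {Ω : Type*} {z z' w : ℝ → Ω} {τ : ℝ}

lemma concat_of_lt {t : ℝ} (ht : t < τ) : concat z z' τ t = z t := if_pos ht

lemma concat_of_le {t : ℝ} (ht : τ ≤ t) : concat z z' τ t = z' (t - τ) :=
  if_neg (not_lt.mpr ht)

lemma concat_eq_self_of_shift (h : ∀ t, τ ≤ t → z' (t - τ) = z t) : concat z z' τ = z := by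
  funext t
  unfold concat
  split_ifs with ht
  · rfl
  · exact h t (not_lt.mp ht)

lemma concat_congr_left (h : ∀ t, t < τ → z t = w t) : concat z z' τ = concat w z' τ := by
  funext t
  unfold concat
  split_ifs with ht
  · exact h t ht
  · rfl

lemma Measurable.concat [MeasurableSpace Ω] (hz : Measurable z) (hz' : Measurable z') (τ : ℝ) :
    Measurable (concat z z' τ) :=
  Measurable.ite measurableSet_Iio hz (hz'.comp (measurable_id.sub_const τ))

end Concat

def windowCost (c t : ℝ) : ℝ := 1 - (Icc c (2 * c)).indicator (fun _ => 1) t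

lemma windowCost_nonneg (c t : ℝ) : 0 ≤ windowCost c t := by
  have := indicator_le_self' (s := Icc c (2 * c)) (f := fun _ => (1 : ℝ))
    (fun _ _ => zero_le_one) t
  unfold windowCost
  linarith

lemma windowCost_le_one (c t : ℝ) : windowCost c t ≤ 1 := by
  have := indicator_nonneg (s := Icc c (2 * c)) (fun _ _ => zero_le_one' ℝ) t
  unfold windowCost
  linarith

lemma norm_windowCost_le_one (c t : ℝ) : ‖windowCost c t‖ ≤ 1 := by
  rw [Real.norm_of_nonneg (windowCost_nonneg c t)]
  exact windowCost_le_one c t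

lemma measurable_windowCost (c : ℝ) : Measurable (windowCost c) :=
  measurable_const.sub (measurable_const.indicator measurableSet_Icc)

lemma integrableOn_windowCost (c : ℝ) {s : Set ℝ} (hs : volume s ≠ ⊤) :
    IntegrableOn (windowCost c) s :=
  Measure.integrableOn_of_bounded hs (measurable_windowCost c).aestronglyMeasurable (M := 1)
    (ae_of_all _ (norm_windowCost_le_one c))

lemma integral_windowCost_Ioc {T : ℝ} (c : ℝ) :
    ∫ t in Ioc 0 T, windowCost c t =
      volume.real (Ioc 0 T) - volume.real (Ioc 0 T ∩ Icc c (2 * c)) := by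
  have hone : IntegrableOn (fun _ => (1 : ℝ)) (Ioc 0 T) :=
    integrableOn_const measure_Ioc_lt_top.ne
  unfold windowCost
  rw [integral_sub hone (hone.indicator measurableSet_Icc), setIntegral_indicator measurableSet_Icc]
  simp

lemma volume_real_Ioc_inter_Icc_le {T : ℝ} (c : ℝ) (hT : 0 ≤ T) :
    volume.real (Ioc 0 T ∩ Icc c (2 * c)) ≤ T / 2 := by
  rcases le_or_gt c (T / 2) with hc | hc
  · calc volume.real (Ioc 0 T ∩ Icc c (2 * c)) ≤ volume.real (Icc c (2 * c)) :=
          measureReal_mono inter_subset_right measure_Icc_lt_top.ne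
      _ ≤ T / 2 := by rw [Real.volume_real_Icc]; exact max_le (by linarith) (by linarith)
  · calc volume.real (Ioc 0 T ∩ Icc c (2 * c)) ≤ volume.real (Icc c T) :=
          measureReal_mono (fun t ht => ⟨ht.2.1, ht.1.2⟩) measure_Icc_lt_top.ne
      _ ≤ T / 2 := by rw [Real.volume_real_Icc]; exact max_le (by linarith) (by linarith)

lemma integral_exp_neg_mul_Ioi_zero {lam : ℝ} (hl : 0 < lam) :
    ∫ t in Ioi 0, Real.exp (-lam * t) = lam⁻¹ := by
  rw [integral_exp_mul_Ioi (neg_lt_zero.mpr hl)]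
  simp

lemma integral_exp_neg_mul_Icc {lam : ℝ} (hl : 0 < lam) {a b : ℝ} (hab : a ≤ b) :
    ∫ t in Icc a b, Real.exp (-lam * t) = (Real.exp (-lam * a) - Real.exp (-lam * b)) / lam := by
  rw [integral_Icc_eq_integral_Ioc, ← intervalIntegral.integral_of_le hab,
    intervalIntegral.integral_comp_mul_left (fun y => Real.exp y) (neg_ne_zero.mpr hl.ne'),
    integral_exp, smul_eq_mul]
  field_simp
  ring

lemma discounted_integral_windowCost {lam c : ℝ} (hl : 0 < lam) (hc : 0 ≤ c) :
    lam * ∫ t in Ioi 0, Real.exp (-lam * t) * windowCost c t =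
      1 - Real.exp (-lam * c) + Real.exp (-lam * c) ^ 2 := by
  have hexp : IntegrableOn (fun t => Real.exp (-lam * t)) (Ici 0) :=
    (exp_neg_integrableOn_Ioi 0 hl).congr_set_ae Ioi_ae_eq_Ici.symm
  have hsplit : (fun t => Real.exp (-lam * t) * windowCost c t) =
      fun t => Real.exp (-lam * t) -
        (Icc c (2 * c)).indicator (fun t => Real.exp (-lam * t)) t := by
    ext t
    by_cases ht : t ∈ Icc c (2 * c) <;> simp [windowCost, ht]
  rw [← integral_Ici_eq_integral_Ioi, hsplit,
    integral_sub hexp (hexp.indicator measurableSet_Icc), setIntegral_indicator measurableSet_Icc,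
    inter_eq_right.mpr fun t ht => mem_Ici.mpr (hc.trans ht.1), integral_Ici_eq_integral_Ioi,
    integral_exp_neg_mul_Ioi_zero hl, integral_exp_neg_mul_Icc hl (by linarith),
    show -lam * (2 * c) = -lam * c + -lam * c by ring, Real.exp_add]
  field_simp
  ring

lemma integral_windowCost_half_Ioc {T : ℝ} (hT : 0 < T) :
    ∫ t in Ioc 0 T, windowCost (T / 2) t = T / 2 := by
  have hsub : Icc (T / 2) (2 * (T / 2)) ⊆ Ioc 0 T := fun t ht =>
    ⟨by linarith [ht.1], by linarith [ht.2]⟩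
  rw [integral_windowCost_Ioc, inter_eq_right.mpr hsub, Real.volume_real_Ioc,
    Real.volume_real_Icc, max_eq_left (by linarith), max_eq_left (by linarith)]
  ring

lemma integrableOn_exp_mul_of_bounded {lam C : ℝ} (hl : 0 < lam) {f : ℝ → ℝ} (hf : Measurable f)
    (hbound : ∀ t, ‖f t‖ ≤ C) : IntegrableOn (fun t => Real.exp (-lam * t) * f t) (Ioi 0) :=
  (exp_neg_integrableOn_Ioi 0 hl).mul_bdd hf.aestronglyMeasurable (ae_of_all _ hbound)

section Averages

variable {Ω : Type*} {g : Ω → ℝ} {z : ℝ → Ω} {c : ℝ}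

lemma half_le_timeAvg {T : ℝ} (hT : 0 < T) (hint : IntegrableOn (fun t => g (z t)) (Ioc 0 T))
    (hle : ∀ t, 0 < t → windowCost c t ≤ g (z t)) : 1 / 2 ≤ timeAvg g T z := by
  have hmono : ∫ t in Ioc 0 T, windowCost c t ≤ ∫ t in Ioc 0 T, g (z t) :=
    setIntegral_mono_on (integrableOn_windowCost c measure_Ioc_lt_top.ne) hint measurableSet_Ioc
      fun t ht => hle t ht.1
  rw [integral_windowCost_Ioc, Real.volume_real_Ioc, max_eq_left (by linarith)] at hmono
  have hvol := volume_real_Ioc_inter_Icc_le c hT.le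
  calc 1 / 2 = 1 / T * (T / 2) := by field_simp
    _ ≤ timeAvg g T z := by unfold timeAvg; gcongr; linarith

lemma three_quarters_le_discAvg {lam : ℝ} (hl : 0 < lam) (hc : 0 ≤ c)
    (hint : IntegrableOn (fun t => Real.exp (-lam * t) * g (z t)) (Ioi 0))
    (hle : ∀ t, 0 < t → windowCost c t ≤ g (z t)) : 3 / 4 ≤ discAvg g lam z := by
  have hwindow : IntegrableOn (fun t => Real.exp (-lam * t) * windowCost c t) (Ioi 0) :=
    integrableOn_exp_mul_of_bounded hl (measurable_windowCost c) (norm_windowCost_le_one c)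
  have hmono : ∫ t in Ioi 0, Real.exp (-lam * t) * windowCost c t ≤
      ∫ t in Ioi 0, Real.exp (-lam * t) * g (z t) :=
    setIntegral_mono_on hwindow hint measurableSet_Ioi fun t ht =>
      mul_le_mul_of_nonneg_left (hle t ht) (Real.exp_pos _).le
  calc 3 / 4 ≤ lam * ∫ t in Ioi 0, Real.exp (-lam * t) * windowCost c t := by
        rw [discounted_integral_windowCost hl hc]
        nlinarith [sq_nonneg (Real.exp (-lam * c) - 1 / 2)]
    _ ≤ discAvg g lam z := mul_le_mul_of_nonneg_left hmono hl.le

end Averages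

lemma gex_nonneg (p : ℝ × ℝ × ℝ) : 0 ≤ gex p := by
  unfold gex; split_ifs <;> norm_num

lemma gex_le_one (p : ℝ × ℝ × ℝ) : gex p ≤ 1 := by
  unfold gex; split_ifs <;> norm_num

lemma norm_gex_le_one (p : ℝ × ℝ × ℝ) : ‖gex p‖ ≤ 1 := by
  rw [Real.norm_of_nonneg (gex_nonneg p)]; exact gex_le_one p

lemma gex_of_snd_snd_ne_zero {p : ℝ × ℝ × ℝ} (hp : p.2.2 ≠ 0) : gex p = 1 :=
  if_neg fun h => hp h.2

lemma measurable_gex : Measurable gex :=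
  Measurable.ite ((measurable_fst measurableSet_Icc).inter
    (measurable_snd.snd (measurableSet_singleton 0))) measurable_const measurable_const

lemma aproc_zero (ω : ℝ × ℝ × ℝ) : aproc ω 0 = ω := by simp [aproc]

lemma aproc_aproc (ω : ℝ × ℝ × ℝ) (s t : ℝ) : aproc (aproc ω s) t = aproc ω (t + s) := by
  simp only [aproc, add_assoc]

lemma bproc_zero (s : ℝ) : bproc s 0 = 0 := by simp [bproc]

lemma gex_aproc {ω : ℝ × ℝ × ℝ} (hω : ω ∈ Omega3) {t : ℝ} (ht : 0 < t) : gex (aproc ω t) = 1 :=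
  gex_of_snd_snd_ne_zero (by simp only [aproc]; linarith [hω.2.2])

lemma gex_bproc {s : ℝ} (hs : 0 < s) (t : ℝ) : gex (bproc s t) = windowCost s⁻¹ t := by
  have hiff : s * t ∈ Icc (1 : ℝ) 2 ↔ t ∈ Icc s⁻¹ (2 * s⁻¹) := by
    rw [mem_Icc, mem_Icc, inv_le_iff_one_le_mul₀ hs, ← div_eq_mul_inv, le_div_iff₀ hs, mul_comm t]
  by_cases ht : t ∈ Icc s⁻¹ (2 * s⁻¹) <;> simp [gex, bproc, windowCost, hiff, ht]

lemma windowCost_inv_le_gex_bproc {s : ℝ} (hs : 0 ≤ s) (t : ℝ) :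
    windowCost s⁻¹ t ≤ gex (bproc s t) := by
  rcases hs.eq_or_lt with rfl | hs
  -- `0⁻¹ = 0`: the window degenerates to `{0}`, and `b_0` never reaches the zero set of `gex`
  · exact (windowCost_le_one _ t).trans_eq (by simp [gex, bproc])
  · exact (gex_bproc hs t).ge

lemma gex_bproc_le_gex_concat (s τ t : ℝ) :
    gex (bproc s t) ≤ gex (concat (bproc s) (aproc (bproc s τ)) τ t) := by
  unfold concat
  split_ifs with ht
  · rfl
  · rcases eq_or_ne t τ with rfl | hne
    · rw [sub_self, aproc_zero]
    · have hr : (aproc (bproc s τ) (t - τ)).2.2 ≠ 0 := by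
        simpa [aproc, bproc, sub_eq_zero] using hne
      rw [gex_of_snd_snd_ne_zero hr]
      exact gex_le_one _

lemma aproc_mem_Kex {ω : ℝ × ℝ × ℝ} (hω : ω ∈ Omega3) : aproc ω ∈ Kex :=
  Or.inl (Or.inl ⟨ω, hω, rfl⟩)

lemma bproc_mem_Kex {s : ℝ} (hs : 0 ≤ s) : bproc s ∈ Kex :=
  Or.inl (Or.inr ⟨s, hs, rfl⟩)

lemma exists_windowCost_le_gex {z : ℝ → ℝ × ℝ × ℝ} (hz : z ∈ Kex) :
    ∃ c, 0 ≤ c ∧ ∀ t, 0 < t → windowCost c t ≤ gex (z t) := by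
  rcases hz with (⟨ω, hω, rfl⟩ | ⟨s, hs, rfl⟩) | ⟨s, hs, τ, -, rfl⟩
  · exact ⟨0, le_rfl, fun t ht => (windowCost_le_one 0 t).trans_eq (gex_aproc hω ht).symm⟩
  · exact ⟨s⁻¹, inv_nonneg.mpr hs, fun t _ => windowCost_inv_le_gex_bproc hs t⟩
  · exact ⟨s⁻¹, inv_nonneg.mpr hs, fun t _ =>
      (windowCost_inv_le_gex_bproc hs t).trans (gex_bproc_le_gex_concat s τ t)⟩

lemma measurable_of_mem_Kex {z : ℝ → ℝ × ℝ × ℝ} (hz : z ∈ Kex) : Measurable z := by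
  have ha (ω : ℝ × ℝ × ℝ) : Measurable (aproc ω) := by unfold aproc; fun_prop
  have hb (s : ℝ) : Measurable (bproc s) := by unfold bproc; fun_prop
  rcases hz with (⟨ω, -, rfl⟩ | ⟨s, -, rfl⟩) | ⟨s, -, τ, -, rfl⟩
  · exact ha ω
  · exact hb s
  · exact (hb s).concat (ha _) τ

lemma eq_aproc_of_mem_Kex {z : ℝ → ℝ × ℝ × ℝ} (hz : z ∈ Kex) (h0 : z 0 ≠ 0) :
    z = aproc (z 0) := by
  rcases hz with (⟨ω, -, rfl⟩ | ⟨s, -, rfl⟩) | ⟨s, -, τ, hτ, rfl⟩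
  · rw [aproc_zero]
  · exact absurd (bproc_zero s) h0
  · exact absurd (by simp [concat, hτ, bproc_zero]) h0

lemma apply_ne_zero_of_mem_Kex {z : ℝ → ℝ × ℝ × ℝ} (hz : z ∈ Kex) {t : ℝ} (ht : 0 < t) :
    z t ≠ 0 := by
  intro h
  have hr := congrArg (·.2.2) h
  have hy := congrArg (·.2.1) h
  rcases hz with (⟨ω, hω, rfl⟩ | ⟨s, -, rfl⟩) | ⟨s, -, τ, hτ, rfl⟩
  · simp only [aproc, Prod.snd_zero] at hr
    linarith [hω.2.2]
  · simp only [bproc, Prod.snd_zero, Prod.fst_zero] at hy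
    linarith
  · unfold concat at hy
    split_ifs at hy <;> simp only [aproc, bproc, Prod.snd_zero, Prod.fst_zero] at hy <;> linarith

lemma concat_mem_Kex {z z' : ℝ → ℝ × ℝ × ℝ} (hz : z ∈ Kex) (hz' : z' ∈ Kex) {τ : ℝ}
    (hτ : 0 < τ) (heq : z τ = z' 0) : concat z z' τ ∈ Kex := by
  obtain rfl : z' = aproc (z τ) := by
    rw [heq]; exact eq_aproc_of_mem_Kex hz' (heq ▸ apply_ne_zero_of_mem_Kex hz hτ)
  rcases hz with (⟨ω, hω, rfl⟩ | ⟨s, hs, rfl⟩) | ⟨s, hs, σ, hσ, rfl⟩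
  · rw [concat_eq_self_of_shift fun t _ => by rw [aproc_aproc, sub_add_cancel]]
    exact aproc_mem_Kex hω
  · exact Or.inr ⟨s, hs, τ, hτ, rfl⟩
  · rcases lt_or_ge τ σ with hτσ | hστ
    · rw [concat_of_lt hτσ, concat_congr_left fun t ht => concat_of_lt (ht.trans hτσ)]
      exact Or.inr ⟨s, hs, τ, hτ, rfl⟩
    · rw [concat_eq_self_of_shift fun t ht => ?_]
      · exact Or.inr ⟨s, hs, σ, hσ, rfl⟩
      · rw [concat_of_le hστ, concat_of_le (hστ.trans ht), aproc_aproc, sub_add_sub_cancel]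

lemma integrableOn_gex_comp {z : ℝ → ℝ × ℝ × ℝ} (hz : Measurable z) {s : Set ℝ}
    (hs : volume s ≠ ⊤) : IntegrableOn (fun t => gex (z t)) s :=
  Measure.integrableOn_of_bounded hs (measurable_gex.comp hz).aestronglyMeasurable
    (ae_of_all _ fun t => norm_gex_le_one (z t))

lemma timeAvg_gex_aproc {T : ℝ} (hT : 0 < T) {ω : ℝ × ℝ × ℝ} (hω : ω ∈ Omega3) :
    timeAvg gex T (aproc ω) = 1 := by
  unfold timeAvg
  rw [setIntegral_congr_fun measurableSet_Ioc (g := fun _ => 1) fun t ht => gex_aproc hω ht.1,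
    setIntegral_const, Real.volume_real_Ioc, max_eq_left (by linarith)]
  field_simp
  simp

lemma discAvg_gex_aproc {lam : ℝ} (hl : 0 < lam) {ω : ℝ × ℝ × ℝ} (hω : ω ∈ Omega3) :
    discAvg gex lam (aproc ω) = 1 := by
  unfold discAvg
  rw [setIntegral_congr_fun measurableSet_Ioi (g := fun t => Real.exp (-lam * t))
      fun t ht => by rw [gex_aproc hω ht, mul_one],
    integral_exp_neg_mul_Ioi_zero hl, mul_inv_cancel₀ hl.ne']

lemma timeAvg_gex_bproc {T : ℝ} (hT : 0 < T) : timeAvg gex T (bproc (2 / T)) = 1 / 2 := by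
  have hcost (t : ℝ) : gex (bproc (2 / T) t) = windowCost (T / 2) t := by
    rw [gex_bproc (by positivity), inv_div]
  unfold timeAvg
  simp_rw [hcost]
  rw [integral_windowCost_half_Ioc hT]
  field_simp

lemma discAvg_gex_bproc {lam : ℝ} (hl : 0 < lam) :
    discAvg gex lam (bproc (lam / Real.log 2)) = 3 / 4 := by
  have hlog : 0 < Real.log 2 := Real.log_pos one_lt_two
  have hcost (t : ℝ) :
      gex (bproc (lam / Real.log 2) t) = windowCost (Real.log 2 / lam) t := by
    rw [gex_bproc (by positivity), inv_div]
  have hhalf : Real.exp (-lam * (Real.log 2 / lam)) = 1 / 2 := by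
    rw [show -lam * (Real.log 2 / lam) = -Real.log 2 by field_simp, Real.exp_neg,
      Real.exp_log two_pos, one_div]
  unfold discAvg
  simp_rw [hcost]
  rw [discounted_integral_windowCost hl (by positivity), hhalf]
  norm_num

lemma half_le_timeAvg_gex {T : ℝ} (hT : 0 < T) {z : ℝ → ℝ × ℝ × ℝ} (hz : z ∈ Kex) :
    1 / 2 ≤ timeAvg gex T z := by
  obtain ⟨c, -, hc⟩ := exists_windowCost_le_gex hz
  exact half_le_timeAvg hT
    (integrableOn_gex_comp (measurable_of_mem_Kex hz) measure_Ioc_lt_top.ne) hc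

lemma three_quarters_le_discAvg_gex {lam : ℝ} (hl : 0 < lam) {z : ℝ → ℝ × ℝ × ℝ}
    (hz : z ∈ Kex) :
    3 / 4 ≤ discAvg gex lam z := by
  obtain ⟨c, hc0, hc⟩ := exists_windowCost_le_gex hz
  exact three_quarters_le_discAvg hl hc0
    (integrableOn_exp_mul_of_bounded hl (measurable_gex.comp (measurable_of_mem_Kex hz))
      fun t => norm_gex_le_one (z t)) hc

lemma val_eq_of_ne_zero {J : (ℝ → ℝ × ℝ × ℝ) → ℝ} {ω : ℝ × ℝ × ℝ} (hω : ω ∈ Omega3)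
    (h0 : ω ≠ 0) : Val Kex J ω = J (aproc ω) :=
  val_eq_of_mem_of_forall_le (aproc_mem_Kex hω) (aproc_zero ω) fun z hz hz0 => by
    rw [eq_aproc_of_mem_Kex hz (hz0.symm ▸ h0), hz0]

lemma val_timeAvg {T : ℝ} (hT : 0 < T) {ω : ℝ × ℝ × ℝ} (hω : ω ∈ Omega3) :
    Val Kex (timeAvg gex T) ω = if ω = 0 then 1 / 2 else 1 := by
  split_ifs with h0
  · subst h0
    refine (val_eq_of_mem_of_forall_le (bproc_mem_Kex (by positivity)) (bproc_zero _)
      fun z hz _ => ?_).trans (timeAvg_gex_bproc hT)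
    exact (timeAvg_gex_bproc hT).trans_le (half_le_timeAvg_gex hT hz)
  · rw [val_eq_of_ne_zero hω h0, timeAvg_gex_aproc hT hω]

lemma val_discAvg {lam : ℝ} (hl : 0 < lam) {ω : ℝ × ℝ × ℝ} (hω : ω ∈ Omega3) :
    Val Kex (discAvg gex lam) ω = if ω = 0 then 3 / 4 else 1 := by
  split_ifs with h0
  · subst h0
    have hs : 0 ≤ lam / Real.log 2 := div_nonneg hl.le (Real.log_nonneg one_le_two)
    refine (val_eq_of_mem_of_forall_le (bproc_mem_Kex hs) (bproc_zero _)
      fun z hz _ => ?_).trans (discAvg_gex_bproc hl)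
    exact (discAvg_gex_bproc hl).trans_le (three_quarters_le_discAvg_gex hl hz)
  · rw [val_eq_of_ne_zero hω h0, discAvg_gex_aproc hl hω]

lemma zero_mem_Omega3 : (0 : ℝ × ℝ × ℝ) ∈ Omega3 := ⟨le_rfl, le_rfl, le_rfl⟩

/-- In the example, `V[v_T]` does not depend on `T > 0`, `V[w_λ]` does not depend
on `λ > 0`, hence `lim_{T→∞} V[v_T] = V[v_1]` and `lim_{λ→0⁺} V[w_λ] = V[w_1]`
exist uniformly on `Ω`; nevertheless `V[w_1](0,0,0) = 3/4 ≠ 1/2 = V[v_1](0,0,0)`,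
so the two uniform limits do not coincide, even though `K` is closed with respect
to concatenation: the conclusion of the Uniform Tauberian Theorem fails. -/
theorem tauberian_fails :
    (∀ T T' : ℝ, 0 < T → 0 < T' → ∀ ω ∈ Omega3,
      Val Kex (timeAvg gex T) ω = Val Kex (timeAvg gex T') ω) ∧
    (∀ lam lam' : ℝ, 0 < lam → 0 < lam' → ∀ ω ∈ Omega3,
      Val Kex (discAvg gex lam) ω = Val Kex (discAvg gex lam') ω) ∧
    TendstoUniformlyOn (fun T ω => Val Kex (timeAvg gex T) ω)
      (Val Kex (timeAvg gex 1)) atTop Omega3 ∧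
    TendstoUniformlyOn (fun lam ω => Val Kex (discAvg gex lam) ω)
      (Val Kex (discAvg gex 1)) (𝓝[>] (0 : ℝ)) Omega3 ∧
    Val Kex (discAvg gex 1) (0, 0, 0) = 3 / 4 ∧
    Val Kex (timeAvg gex 1) (0, 0, 0) = 1 / 2 ∧
    Val Kex (discAvg gex 1) (0, 0, 0) ≠ Val Kex (timeAvg gex 1) (0, 0, 0) ∧
    (∀ z ∈ Kex, ∀ z' ∈ Kex, ∀ τ : ℝ, 0 < τ → z τ = z' 0 →
      concat z z' τ ∈ Kex) := by
  have htime : Val Kex (timeAvg gex 1) (0, 0, 0) = 1 / 2 :=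
    (val_timeAvg one_pos zero_mem_Omega3).trans (if_pos rfl)
  have hdisc : Val Kex (discAvg gex 1) (0, 0, 0) = 3 / 4 :=
    (val_discAvg one_pos zero_mem_Omega3).trans (if_pos rfl)
  refine ⟨fun T T' hT hT' ω hω => by rw [val_timeAvg hT hω, val_timeAvg hT' hω],
    fun lam lam' hl hl' ω hω => by rw [val_discAvg hl hω, val_discAvg hl' hω],
    tendstoUniformlyOn_of_eventually_eqOn ((eventually_gt_atTop 0).mono fun T hT ω hω =>
      (val_timeAvg hT hω).trans (val_timeAvg one_pos hω).symm),
    tendstoUniformlyOn_of_eventually_eqOn (eventually_mem_nhdsWithin.mono fun lam hl ω hω =>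
      (val_discAvg hl hω).trans (val_discAvg one_pos hω).symm),
    hdisc, htime, by rw [hdisc, htime]; norm_num,
    fun z hz z' hz' τ hτ heq => concat_mem_Kex hz hz' hτ heq⟩
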